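/- For a random variable X with density proportional to (1−x²)^{(n−4)/2} on [−1,1] (sample correlation under zero population correlation, n > 2 samples), and any 0 < ε < 1: P(|X| > ε) < 21·exp(−nε²/4)/(ε√n). -/

import Mathlib

open MeasureTheory Real

/-- The density of the sample correlation coefficient under zero population
correlation, based on `n` samples:
`f_n(x) = [Γ((n−1)/2)/(Γ((n−2)/2)√π)] (1−x²)^{(n−4)/2}` on `[−1,1]`. -/
noncomputable def corrPDF (n : ℕ) (x : ℝ) : ℝ :=
  if x ∈ Set.Icc (-1 : ℝ) 1 then
    Real.Gamma (((n : ℝ) - 1) / 2) / (Real.Gamma (((n : ℝ) - 2) / 2) * Real.sqrt Real.pi) *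
      (1 - x ^ 2) ^ (((n : ℝ) - 4) / 2)
  else 0

open Set intervalIntegral

lemma corr_base_bound {k b : ℝ} (h1 : 1 ≤ b) (h2 : b ≤ 2) : b ^ k ≤ 2 ^ k + 1 := by
  have h2k : (0:ℝ) ≤ 2 ^ k := Real.rpow_nonneg (by norm_num) k
  rcases le_or_gt 0 k with hk | hk
  · have := Real.rpow_le_rpow (by linarith) h2 hk
    linarith
  · have := Real.rpow_le_one_of_one_le_of_nonpos h1 hk.le
    linarith

lemma corr_integrable {k : ℝ} (hk : -1 < k) :
    IntervalIntegrable (fun x => x * (1 - x ^ 2) ^ k) volume (-1) 1 := by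
  have h1 : IntervalIntegrable (fun x : ℝ => (1 + x) ^ k) volume (-1) 1 := by
    have := (intervalIntegral.intervalIntegrable_rpow' (a := 0) (b := 2) hk).comp_add_right 1
    norm_num at this
    simpa [add_comm] using this
  have h2 : IntervalIntegrable (fun x : ℝ => (1 - x) ^ k) volume (-1) 1 := by
    have := (intervalIntegral.intervalIntegrable_rpow' (a := 0) (b := 2) hk).comp_sub_left 1
    norm_num at this
    exact this.symm
  have hg : IntervalIntegrable (fun x : ℝ => (2 ^ k + 1) * ((1 + x) ^ k + (1 - x) ^ k))
      volume (-1) 1 := (h1.add h2).const_mul _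
  apply hg.mono_fun'
  · exact (by fun_prop : Measurable fun x : ℝ => x * (1 - x ^ 2) ^ k).aestronglyMeasurable
  · rw [Set.uIoc_of_le (by norm_num : (-1:ℝ) ≤ 1)]
    refine (ae_restrict_iff' measurableSet_Ioc).mpr (Filter.Eventually.of_forall ?_)
    intro x hx
    have hx1 : -1 < x := hx.1
    have hx2 : x ≤ 1 := hx.2
    have hb1 : (0:ℝ) ≤ 1 - x := by linarith
    have hb2 : (0:ℝ) ≤ 1 + x := by linarith
    have hb : (0:ℝ) ≤ 1 - x ^ 2 := by nlinarith
    have habs : ‖x * (1 - x ^ 2) ^ k‖ ≤ (1 - x ^ 2) ^ k := by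
      rw [norm_mul, norm_eq_abs, norm_eq_abs, abs_of_nonneg (Real.rpow_nonneg hb k)]
      have : |x| ≤ 1 := abs_le.mpr ⟨hx1.le, hx2⟩
      nlinarith [Real.rpow_nonneg hb k]
    have hsplit : (1 - x ^ 2) ^ k = (1 - x) ^ k * (1 + x) ^ k := by
      rw [← Real.mul_rpow hb1 hb2]; ring_nf
    have h2k1 : (0:ℝ) ≤ 2 ^ k + 1 := by positivity
    have hkey : (1 - x ^ 2) ^ k ≤ (2 ^ k + 1) * ((1 + x) ^ k + (1 - x) ^ k) := by
      rw [hsplit]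
      rcases le_or_gt x 0 with hx0 | hx0
      · have hbb : (1 - x) ^ k ≤ 2 ^ k + 1 := corr_base_bound (by linarith) (by linarith)
        have := mul_le_mul_of_nonneg_right hbb (Real.rpow_nonneg hb2 k)
        nlinarith [Real.rpow_nonneg hb1 k, Real.rpow_nonneg hb2 k]
      · have hbb : (1 + x) ^ k ≤ 2 ^ k + 1 := corr_base_bound (by linarith) (by linarith)
        have := mul_le_mul_of_nonneg_left hbb (Real.rpow_nonneg hb1 k)
        nlinarith [Real.rpow_nonneg hb1 k, Real.rpow_nonneg hb2 k]
    exact habs.trans hkey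

lemma corr_ftc_right {k : ℝ} (hk : -1 < k) {ε : ℝ} (hε0 : 0 < ε) (hε1 : ε < 1) :
    ∫ x in ε..1, x * (1 - x ^ 2) ^ k = (1 - ε ^ 2) ^ (k + 1) / (2 * (k + 1)) := by
  have hK : 0 < k + 1 := by linarith
  set F : ℝ → ℝ := fun x => -(1 - x ^ 2) ^ (k + 1) / (2 * (k + 1)) with hF
  have hcont : ContinuousOn F (Icc ε 1) := by
    apply Continuous.continuousOn
    exact (((Real.continuous_rpow_const hK.le).comp
      (by continuity : Continuous fun x : ℝ => 1 - x ^ 2)).neg).div_const _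
  have hderiv : ∀ x ∈ Ioo ε 1, HasDerivWithinAt F (x * (1 - x ^ 2) ^ k) (Ioi x) x := by
    intro x hx
    have hb : (0:ℝ) < 1 - x ^ 2 := by nlinarith [hx.1, hx.2, hε0]
    have h1 : HasDerivAt (fun x : ℝ => 1 - x ^ 2) (-(2 * x)) x := by
      simpa using (hasDerivAt_pow 2 x).const_sub 1
    have h2 := ((h1.rpow_const (p := k + 1) (Or.inl hb.ne')).neg).div_const (2 * (k + 1))
    have : -(-(2 * x) * (k + 1) * (1 - x ^ 2) ^ (k + 1 - 1)) / (2 * (k + 1))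
        = x * (1 - x ^ 2) ^ k := by
      rw [add_sub_cancel_right]
      field_simp
    rw [← this]
    exact h2.hasDerivWithinAt
  have hint : IntervalIntegrable (fun x => x * (1 - x ^ 2) ^ k) volume ε 1 :=
    (corr_integrable hk).mono_set' (by
      rw [Set.uIoc_of_le hε1.le, Set.uIoc_of_le (by norm_num : (-1:ℝ) ≤ 1)]
      exact Set.Ioc_subset_Ioc (by linarith) le_rfl)
  rw [intervalIntegral.integral_eq_sub_of_hasDeriv_right_of_le hε1.le hcont hderiv hint]
  have h1 : F 1 = 0 := by
    simp only [hF]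
    norm_num [Real.zero_rpow hK.ne']
  rw [h1, hF]
  ring

lemma corr_ftc_left {k : ℝ} (hk : -1 < k) {ε : ℝ} (hε0 : 0 < ε) (hε1 : ε < 1) :
    ∫ x in (-1)..(-ε), -x * (1 - x ^ 2) ^ k = (1 - ε ^ 2) ^ (k + 1) / (2 * (k + 1)) := by
  have hK : 0 < k + 1 := by linarith
  set F : ℝ → ℝ := fun x => (1 - x ^ 2) ^ (k + 1) / (2 * (k + 1)) with hF
  have hcont : ContinuousOn F (Icc (-1) (-ε)) := by
    apply Continuous.continuousOn
    exact ((Real.continuous_rpow_const hK.le).comp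
      (by continuity : Continuous fun x : ℝ => 1 - x ^ 2)).div_const _
  have hderiv : ∀ x ∈ Ioo (-1) (-ε), HasDerivWithinAt F (-x * (1 - x ^ 2) ^ k) (Ioi x) x := by
    intro x hx
    have hb : (0:ℝ) < 1 - x ^ 2 := by nlinarith [hx.1, hx.2, hε0]
    have h1 : HasDerivAt (fun x : ℝ => 1 - x ^ 2) (-(2 * x)) x := by
      simpa using (hasDerivAt_pow 2 x).const_sub 1
    have h2 := (h1.rpow_const (p := k + 1) (Or.inl hb.ne')).div_const (2 * (k + 1))
    have : -(2 * x) * (k + 1) * (1 - x ^ 2) ^ (k + 1 - 1) / (2 * (k + 1))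
        = -x * (1 - x ^ 2) ^ k := by
      rw [add_sub_cancel_right]
      field_simp
    rw [← this]
    exact h2.hasDerivWithinAt
  have hint : IntervalIntegrable (fun x => -x * (1 - x ^ 2) ^ k) volume (-1) (-ε) := by
    have hsub : Set.uIoc (-1:ℝ) (-ε) ⊆ Set.uIoc (-1:ℝ) 1 := by
      rw [Set.uIoc_of_le (by linarith : (-1:ℝ) ≤ -ε),
        Set.uIoc_of_le (by norm_num : (-1:ℝ) ≤ 1)]
      exact Set.Ioc_subset_Ioc le_rfl (by linarith)
    simpa [neg_mul, Pi.neg_def] using ((corr_integrable hk).mono_set' hsub).neg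
  rw [intervalIntegral.integral_eq_sub_of_hasDeriv_right_of_le (by linarith) hcont hderiv hint]
  have h1 : F (-1) = 0 := by
    simp only [hF]
    norm_num [Real.zero_rpow hK.ne']
  rw [h1, hF]
  ring_nf

lemma corr_gamma_bound {K : ℝ} (hK : 0 < K) :
    Real.Gamma (K + 1/2) ≤ Real.Gamma K * Real.sqrt K := by
  have hG : 0 < Real.Gamma K := Real.Gamma_pos_of_pos hK
  have h := Real.Gamma_mul_add_mul_le_rpow_Gamma_mul_rpow_Gamma (s := K) (t := K + 1)
    hK (by linarith) (a := 1/2) (b := 1/2) (by norm_num) (by norm_num) (by norm_num)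
  have harg : (1/2 : ℝ) * K + 1/2 * (K + 1) = K + 1/2 := by ring
  rw [harg, Real.Gamma_add_one hK.ne'] at h
  calc Real.Gamma (K + 1/2) ≤ Real.Gamma K ^ (1/2:ℝ) * (K * Real.Gamma K) ^ (1/2:ℝ) := h
    _ = Real.Gamma K * Real.sqrt K := by
        rw [Real.mul_rpow hK.le hG.le, Real.sqrt_eq_rpow]
        rw [show Real.Gamma K ^ (1/2:ℝ) * (K ^ (1/2:ℝ) * Real.Gamma K ^ (1/2:ℝ))
            = (Real.Gamma K ^ (1/2:ℝ) * Real.Gamma K ^ (1/2:ℝ)) * K ^ (1/2:ℝ) by ring,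
          ← Real.rpow_add hG]
        norm_num

set_option maxHeartbeats 2000000 in
/-- Tail bound for the sample correlation coefficient with zero population
correlation: for `n > 2` and `0 < ε < 1`, `P(|X| > ε) < 21 exp(−nε²/4)/(ε√n)`. -/
theorem corr_tail_bound_zero (n : ℕ) (hn : 2 < n) (ε : ℝ) (hε0 : 0 < ε) (hε1 : ε < 1) :
    ((volume.withDensity fun x => ENNReal.ofReal (corrPDF n x)) {x : ℝ | ε < |x|}).toReal <
      21 * Real.exp (-(n : ℝ) * ε ^ 2 / 4) / (ε * Real.sqrt n) := by
  have hn3 : (3:ℝ) ≤ (n:ℝ) := by exact_mod_cast hn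
  obtain ⟨k, hk_def⟩ : ∃ x : ℝ, x = ((n:ℝ) - 4)/2 := ⟨_, rfl⟩
  obtain ⟨K, hK_def⟩ : ∃ x : ℝ, x = ((n:ℝ) - 2)/2 := ⟨_, rfl⟩
  have hk : -1 < k := by rw [hk_def]; linarith
  have hK0 : 0 < K := by rw [hK_def]; linarith
  have hKk : K = k + 1 := by rw [hK_def, hk_def]; ring
  have hε2 : (0:ℝ) < 1 - ε^2 := by nlinarith
  obtain ⟨C, hC_def⟩ : ∃ x : ℝ, x = Real.Gamma (((n : ℝ) - 1) / 2) /
      (Real.Gamma (((n : ℝ) - 2) / 2) * Real.sqrt Real.pi) := ⟨_, rfl⟩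
  have hGK : 0 < Real.Gamma (((n : ℝ) - 2) / 2) := Real.Gamma_pos_of_pos (by linarith)
  have hsqrtpi : 0 < Real.sqrt Real.pi := Real.sqrt_pos.mpr Real.pi_pos
  have hC0 : 0 < C := by
    rw [hC_def]
    exact div_pos (Real.Gamma_pos_of_pos (by linarith)) (mul_pos hGK hsqrtpi)
  obtain ⟨B, hB_def⟩ : ∃ x : ℝ, x = C / ε * ((1 - ε^2) ^ K / (2 * K)) := ⟨_, rfl⟩
  have hrpnn : (0:ℝ) ≤ (1 - ε^2) ^ K := Real.rpow_nonneg hε2.le K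
  have hB0 : 0 ≤ B := by
    rw [hB_def]
    have h1 := hC0.le
    positivity
  obtain ⟨μ, hμ_def⟩ :
      ∃ m : Measure ℝ, m = volume.withDensity fun x => ENNReal.ofReal (corrPDF n x) := ⟨_, rfl⟩
  rw [show (volume.withDensity fun x => ENNReal.ofReal (corrPDF n x)) = μ from hμ_def.symm]
  have hzero1 : μ {(-1:ℝ)} = 0 := by
    rw [hμ_def]
    exact withDensity_absolutelyContinuous volume _ (by simp)
  have hzero2 : μ (Set.Icc (-1:ℝ) 1)ᶜ = 0 := by
    rw [hμ_def, withDensity_apply _ measurableSet_Icc.compl]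
    have hae : ∀ᵐ x ∂volume, x ∈ (Set.Icc (-1:ℝ) 1)ᶜ →
        ENNReal.ofReal (corrPDF n x) = (fun _ => (0:ENNReal)) x :=
      Filter.Eventually.of_forall fun x hx => by
        simp only [corrPDF, if_neg hx, ENNReal.ofReal_zero]
    rw [setLIntegral_congr_fun_ae measurableSet_Icc.compl hae, lintegral_zero]
  have hsub1 : Set.uIoc ε 1 ⊆ Set.uIoc (-1:ℝ) 1 := by
    rw [Set.uIoc_of_le hε1.le, Set.uIoc_of_le (by norm_num : (-1:ℝ) ≤ 1)]
    exact Set.Ioc_subset_Ioc (by linarith) le_rfl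
  have hsub2 : Set.uIoc (-1:ℝ) (-ε) ⊆ Set.uIoc (-1:ℝ) 1 := by
    rw [Set.uIoc_of_le (by linarith : (-1:ℝ) ≤ -ε), Set.uIoc_of_le (by norm_num : (-1:ℝ) ≤ 1)]
    exact Set.Ioc_subset_Ioc le_rfl (by linarith)
  have hIoc1 : μ (Set.Ioc ε 1) ≤ ENNReal.ofReal B := by
    rw [hμ_def, withDensity_apply _ measurableSet_Ioc]
    have hmeas : Measurable fun x : ℝ => ENNReal.ofReal (C/ε * (x * (1 - x^2) ^ k)) :=
      (by fun_prop : Measurable fun x : ℝ => C/ε * (x * (1 - x^2) ^ k)).ennreal_ofReal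
    have hpt : ∀ x ∈ Set.Ioc ε 1,
        ENNReal.ofReal (corrPDF n x) ≤ ENNReal.ofReal (C/ε * (x * (1 - x^2) ^ k)) := by
      intro x hx
      apply ENNReal.ofReal_le_ofReal
      have hxI : x ∈ Set.Icc (-1:ℝ) 1 := ⟨by linarith [hx.1], hx.2⟩
      have hrp : (0:ℝ) ≤ (1 - x^2) ^ k :=
        Real.rpow_nonneg (by nlinarith [hx.1, hx.2, hε0] : (0:ℝ) ≤ 1 - x^2) k
      have hpdf : corrPDF n x = C * (1 - x ^ 2) ^ k := by
        simp only [corrPDF, if_pos hxI, hC_def, hk_def]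
      rw [hpdf, div_mul_eq_mul_div, le_div_iff₀ hε0]
      nlinarith [mul_nonneg (mul_nonneg hC0.le hrp) (sub_nonneg.mpr hx.1.le)]
    refine le_trans (setLIntegral_mono hmeas hpt) ?_
    have hInt : IntegrableOn (fun x => C/ε * (x * (1 - x^2) ^ k)) (Set.Ioc ε 1) volume := by
      have h0 := ((corr_integrable hk).mono_set' hsub1).const_mul (C/ε)
      exact (intervalIntegrable_iff_integrableOn_Ioc_of_le hε1.le).mp h0
    have hnn : 0 ≤ᵐ[volume.restrict (Set.Ioc ε 1)] fun x => C/ε * (x * (1 - x^2) ^ k) := by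
      refine (ae_restrict_iff' measurableSet_Ioc).mpr (Filter.Eventually.of_forall fun x hx => ?_)
      have h1 : (0:ℝ) ≤ (1 - x^2) ^ k :=
        Real.rpow_nonneg (by nlinarith [hx.1, hx.2, hε0] : (0:ℝ) ≤ 1 - x^2) k
      exact mul_nonneg (div_nonneg hC0.le hε0.le)
        (mul_nonneg (by linarith [hx.1] : (0:ℝ) ≤ x) h1)
    rw [← MeasureTheory.ofReal_integral_eq_lintegral_ofReal hInt hnn]
    apply ENNReal.ofReal_le_ofReal
    rw [← intervalIntegral.integral_of_le hε1.le, intervalIntegral.integral_const_mul,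
      corr_ftc_right hk hε0 hε1, hB_def, hKk]
  have hIoc2 : μ (Set.Ioc (-1:ℝ) (-ε)) ≤ ENNReal.ofReal B := by
    rw [hμ_def, withDensity_apply _ measurableSet_Ioc]
    have hmeas : Measurable fun x : ℝ => ENNReal.ofReal (C/ε * (-x * (1 - x^2) ^ k)) :=
      (by fun_prop : Measurable fun x : ℝ => C/ε * (-x * (1 - x^2) ^ k)).ennreal_ofReal
    have hpt : ∀ x ∈ Set.Ioc (-1:ℝ) (-ε),
        ENNReal.ofReal (corrPDF n x) ≤ ENNReal.ofReal (C/ε * (-x * (1 - x^2) ^ k)) := by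
      intro x hx
      apply ENNReal.ofReal_le_ofReal
      have hxI : x ∈ Set.Icc (-1:ℝ) 1 := ⟨hx.1.le, by linarith [hx.2]⟩
      have hrp : (0:ℝ) ≤ (1 - x^2) ^ k :=
        Real.rpow_nonneg (by nlinarith [hx.1, hx.2, hε0] : (0:ℝ) ≤ 1 - x^2) k
      have hpdf : corrPDF n x = C * (1 - x ^ 2) ^ k := by
        simp only [corrPDF, if_pos hxI, hC_def, hk_def]
      rw [hpdf, div_mul_eq_mul_div, le_div_iff₀ hε0]
      nlinarith [mul_nonneg (mul_nonneg hC0.le hrp)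
        (sub_nonneg.mpr (by linarith [hx.2] : ε ≤ -x))]
    refine le_trans (setLIntegral_mono hmeas hpt) ?_
    have hInt : IntegrableOn (fun x => C/ε * (-x * (1 - x^2) ^ k))
        (Set.Ioc (-1:ℝ) (-ε)) volume := by
      have h0 : IntervalIntegrable (fun x => -x * (1 - x^2) ^ k) volume (-1) (-ε) := by
        simpa [neg_mul, Pi.neg_def] using ((corr_integrable hk).mono_set' hsub2).neg
      exact (intervalIntegrable_iff_integrableOn_Ioc_of_le (by linarith : (-1:ℝ) ≤ -ε)).mp
        (h0.const_mul (C/ε))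
    have hnn : 0 ≤ᵐ[volume.restrict (Set.Ioc (-1:ℝ) (-ε))]
        fun x => C/ε * (-x * (1 - x^2) ^ k) := by
      refine (ae_restrict_iff' measurableSet_Ioc).mpr (Filter.Eventually.of_forall fun x hx => ?_)
      have h1 : (0:ℝ) ≤ (1 - x^2) ^ k :=
        Real.rpow_nonneg (by nlinarith [hx.1, hx.2, hε0] : (0:ℝ) ≤ 1 - x^2) k
      exact mul_nonneg (div_nonneg hC0.le hε0.le)
        (mul_nonneg (by linarith [hx.2] : (0:ℝ) ≤ -x) h1)
    rw [← MeasureTheory.ofReal_integral_eq_lintegral_ofReal hInt hnn]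
    apply ENNReal.ofReal_le_ofReal
    rw [← intervalIntegral.integral_of_le (by linarith : (-1:ℝ) ≤ -ε),
      intervalIntegral.integral_const_mul, corr_ftc_left hk hε0 hε1, hB_def, hKk]
  have hSsub : {x : ℝ | ε < |x|} ⊆
      (Set.Ioc ε 1 ∪ Set.Ioc (-1:ℝ) (-ε)) ∪ ({(-1:ℝ)} ∪ (Set.Icc (-1:ℝ) 1)ᶜ) := by
    intro x hx
    simp only [Set.mem_setOf_eq] at hx
    by_cases hmem : x ∈ Set.Icc (-1:ℝ) 1
    · rcases le_or_gt x 0 with h0 | h0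
      · rcases eq_or_lt_of_le hmem.1 with h1 | h1
        · exact Or.inr (Or.inl (by simp [← h1]))
        · refine Or.inl (Or.inr ⟨h1, ?_⟩)
          rw [abs_of_nonpos h0] at hx
          linarith
      · refine Or.inl (Or.inl ⟨?_, hmem.2⟩)
        rwa [abs_of_pos h0] at hx
    · exact Or.inr (Or.inr hmem)
  have hkey : μ {x : ℝ | ε < |x|} ≤ ENNReal.ofReal (B + B) := by
    refine le_trans (measure_mono hSsub) ?_
    refine le_trans (measure_union_le _ _) ?_
    have h1 : μ (Set.Ioc ε 1 ∪ Set.Ioc (-1:ℝ) (-ε)) ≤ ENNReal.ofReal B + ENNReal.ofReal B :=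
      le_trans (measure_union_le _ _) (add_le_add hIoc1 hIoc2)
    have h2 : μ ({(-1:ℝ)} ∪ (Set.Icc (-1:ℝ) 1)ᶜ) ≤ 0 :=
      le_trans (measure_union_le _ _) (by rw [hzero1, hzero2, add_zero])
    calc μ (Set.Ioc ε 1 ∪ Set.Ioc (-1:ℝ) (-ε)) + μ ({(-1:ℝ)} ∪ (Set.Icc (-1:ℝ) 1)ᶜ)
        ≤ (ENNReal.ofReal B + ENNReal.ofReal B) + 0 := add_le_add h1 h2
      _ = ENNReal.ofReal (B + B) := by rw [add_zero, ENNReal.ofReal_add hB0 hB0]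
  -- final numeric estimate
  obtain ⟨E, hE_def⟩ : ∃ x : ℝ, x = Real.exp (-(n:ℝ) * ε^2 / 4) := ⟨_, rfl⟩
  have hE0 : 0 < E := hE_def ▸ Real.exp_pos _
  obtain ⟨s, hs_def⟩ : ∃ x : ℝ, x = Real.sqrt (n:ℝ) := ⟨_, rfl⟩
  have hs0 : 0 < s := hs_def ▸ Real.sqrt_pos.mpr (by linarith)
  obtain ⟨t, ht_def⟩ : ∃ x : ℝ, x = Real.sqrt K := ⟨_, rfl⟩
  have ht0 : 0 < t := ht_def ▸ Real.sqrt_pos.mpr hK0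
  have htK : t * t = K := by rw [ht_def]; exact Real.mul_self_sqrt hK0.le
  have hCle : C ≤ t / Real.sqrt Real.pi := by
    have h := corr_gamma_bound hK0
    have harg : ((n:ℝ) - 1)/2 = K + 1/2 := by rw [hK_def]; ring
    rw [hC_def, harg]
    calc Real.Gamma (K + 1/2) / (Real.Gamma (((n:ℝ) - 2)/2) * Real.sqrt Real.pi)
        ≤ Real.Gamma (((n:ℝ) - 2)/2) * t /
            (Real.Gamma (((n:ℝ) - 2)/2) * Real.sqrt Real.pi) := by
          apply (div_le_div_iff_of_pos_right (mul_pos hGK hsqrtpi)).mpr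
          rw [ht_def, ← hK_def]
          exact h
      _ = t / Real.sqrt Real.pi := mul_div_mul_left _ _ hGK.ne'
  have hexp : (1 - ε^2) ^ K ≤ Real.exp 1 * E := by
    rw [Real.rpow_def_of_pos hε2, hE_def, ← Real.exp_add]
    apply Real.exp_le_exp.mpr
    have hlog : Real.log (1 - ε^2) ≤ -ε^2 := by
      have h1 := Real.log_le_sub_one_of_pos hε2
      linarith
    have h2 : Real.log (1 - ε^2) * K ≤ -ε^2 * K :=
      mul_le_mul_of_nonneg_right hlog hK0.le
    have h3 : -ε^2 * K ≤ 1 + -(n:ℝ) * ε^2 / 4 := by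
      rw [hK_def]
      nlinarith [sq_nonneg ε]
    linarith
  have hpi1 : (1:ℝ) ≤ Real.sqrt Real.pi := by
    rw [show (1:ℝ) = Real.sqrt 1 from (Real.sqrt_one).symm]
    exact Real.sqrt_le_sqrt (by linarith [Real.pi_gt_three])
  have hsqrt6 : Real.sqrt 6 ≤ 2.5 := by
    nlinarith [Real.sq_sqrt (show (0:ℝ) ≤ 6 by norm_num), Real.sqrt_nonneg 6]
  have hsqrt6pos : (0:ℝ) < Real.sqrt 6 := Real.sqrt_pos.mpr (by norm_num)
  have hts : s / Real.sqrt 6 ≤ t := by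
    rw [div_le_iff₀ hsqrt6pos, hs_def, ht_def]
    have h6K : (n:ℝ) ≤ 6 * K := by rw [hK_def]; linarith
    calc Real.sqrt (n:ℝ) ≤ Real.sqrt (6 * K) := Real.sqrt_le_sqrt h6K
      _ = Real.sqrt 6 * Real.sqrt K := Real.sqrt_mul (by norm_num) K
      _ = Real.sqrt K * Real.sqrt 6 := mul_comm _ _
  have hfinal : B + B < 21 * E / (ε * s) := by
    have hsum : B + B = C * (1 - ε^2) ^ K / (K * ε) := by
      rw [hB_def]
      field_simp
      ring
    rw [hsum]
    have hKε : (0:ℝ) < K * ε := mul_pos hK0 hε0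
    calc C * (1 - ε^2) ^ K / (K * ε)
        ≤ t / Real.sqrt Real.pi * (Real.exp 1 * E) / (K * ε) := by
          apply (div_le_div_iff_of_pos_right hKε).mpr
          exact mul_le_mul hCle hexp hrpnn (by positivity)
      _ ≤ t * (Real.exp 1 * E) / (K * ε) := by
          apply (div_le_div_iff_of_pos_right hKε).mpr
          exact mul_le_mul_of_nonneg_right (div_le_self ht0.le hpi1) (by positivity)
      _ = Real.exp 1 * E / (t * ε) := by
          rw [← htK]
          field_simp
      _ ≤ Real.exp 1 * E / (s / Real.sqrt 6 * ε) := by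
          apply div_le_div_of_nonneg_left (by positivity) (by positivity)
          exact mul_le_mul_of_nonneg_right hts hε0.le
      _ = Real.sqrt 6 * Real.exp 1 * E / (s * ε) := by
          field_simp
      _ < 21 * E / (ε * s) := by
          rw [mul_comm ε s]
          apply (div_lt_div_iff_of_pos_right (mul_pos hs0 hε0)).mpr
          have h1 : Real.sqrt 6 * Real.exp 1 < 21 := by
            nlinarith [Real.exp_one_lt_d9, Real.exp_pos 1, Real.sqrt_nonneg 6]
          nlinarith [hE0]
  have hgoal : (μ {x : ℝ | ε < |x|}).toReal ≤ B + B :=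
    ENNReal.toReal_le_of_le_ofReal (by linarith) hkey
  rw [hE_def, hs_def] at hfinal
  linarith
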